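/- Let (S, L, P) be a labelled Markov chain, where P : S × L × S → [0,1] satisfies Σ_t P(s,ℓ,t) ≤ 1 for all s, ℓ. If R is a symmetric preorder (hence an equivalence relation) that is a probabilistic simulation, i.e., for all (s,t) ∈ R, all labels ℓ and all X ⊆ S we have P(s,ℓ,X) ≤ P(t,ℓ,R(X)), then R is a probabilistic bisimulation: for every equivalence class E of R and every label ℓ, P(s,ℓ,E) = P(t,ℓ,E) whenever (s,t) ∈ R. -/
import Mathlib


open scoped NNReal ENNReal

/-- `ProbTo P s ℓ X = Σ_{t ∈ X} P(s,ℓ,t)`. -/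
noncomputable def ProbTo {S L : Type*} (P : S → L → S → ℝ≥0) (s : S) (ℓ : L) (X : Set S) : ℝ≥0∞ :=
  ∑' t : X, (P s ℓ (t : S) : ℝ≥0∞)

/-- The `R`-image of a set. -/
def RImg {S : Type*} (R : S → S → Prop) (X : Set S) : Set S := {t | ∃ x ∈ X, R x t}

/-- In a labelled Markov chain, a symmetric preorder which is a probabilistic
simulation is a probabilistic bisimulation: related states assign equal
probabilities to every `R`-equivalence class. -/
theorem symmetric_simulation_is_bisimulation
    {S L : Type*} [Countable S] (P : S → L → S → ℝ≥0)
    (hsub : ∀ s ℓ, ProbTo P s ℓ Set.univ ≤ 1)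
    (R : S → S → Prop) (hrefl : Reflexive R) (htrans : Transitive R) (hsymm : Symmetric R)
    (hsim : ∀ s t, R s t → ∀ ℓ (X : Set S), ProbTo P s ℓ X ≤ ProbTo P t ℓ (RImg R X)) :
    ∀ s t, R s t → ∀ ℓ (x : S), ProbTo P s ℓ {u | R x u} = ProbTo P t ℓ {u | R x u} := by
  intro s t hst ℓ x
  have himg : RImg R {u | R x u} = {u | R x u} := by
    ext v
    constructor
    · rintro ⟨y, hy, hyv⟩
      exact htrans hy hyv
    · intro hv
      exact ⟨v, hv, hrefl v⟩
  have h1 := hsim s t hst ℓ {u | R x u}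
  have h2 := hsim t s (hsymm hst) ℓ {u | R x u}
  rw [himg] at h1 h2
  exact le_antisymm h1 h2
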